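/- arXiv:quant-ph/0308125 — 2 statements merged into one kernel-verified Lean document; each statement's English description precedes it below -/
import Mathlib

section
/- Every unit vector in $(\mathbb{C}^2)^{\otimes (n+1)}$ can be generated from the basis state $|0^{n+1}\rangle$ by a sequence of $n+1$ controlled single-qubit unitaries: there exist $2\times 2$ unitary matrices $U^{(s)}$ for each binary string $s$ of length at most $n$ such that $|\phi\rangle = U_n U_{n-1} \cdots U_0 |0^{n+1}\rangle$, where $U_0 = U^{(\lambda)} \otimes I^{\otimes n}$ and $U_k = \sum_{s:|s|=k} |s\rangle\langle s| \otimes U^{(s)} \otimes I^{\otimes (n-k)}$ for $1 \le k \le n$. -/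
open scoped Matrix

/-- The controlled operator `∑_{s : |s| = k} |s⟩⟨s| ⊗ U^(s) ⊗ I^{⊗(n-k)}` on
`n + 1` qubits: it acts with `V s` on qubit `k`, controlled on the first `k`
qubits being in basis state `|s⟩`, and as the identity elsewhere. -/
def ctrlOp (n : ℕ) (k : Fin (n + 1))
    (V : (Fin (k : ℕ) → Fin 2) → Matrix (Fin 2) (Fin 2) ℂ) :
    Matrix (Fin (n + 1) → Fin 2) (Fin (n + 1) → Fin 2) ℂ :=
  Matrix.of fun x y =>
    if ∀ i : Fin (n + 1), i ≠ k → x i = y i then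
      V (fun i => x (Fin.castLE k.isLt.le i)) (x k) (y k)
    else 0

section QPrepAux

open Finset

/-- 2×2 unitary with prescribed first column. -/
lemma col_unitary (a b : ℂ) (d : ℝ) (hd : d ≠ 0)
    (h : Complex.normSq a + Complex.normSq b = d ^ 2) :
    (!![a / d, -(starRingEnd ℂ) b / d; b / d, (starRingEnd ℂ) a / d]) ∈
      Matrix.unitaryGroup (Fin 2) ℂ := by
  rw [Matrix.mem_unitaryGroup_iff]
  have hd' : (d : ℂ) ≠ 0 := Complex.ofReal_ne_zero.mpr hd
  have key : a * (starRingEnd ℂ) a + b * (starRingEnd ℂ) b = (d : ℂ) ^ 2 := by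
    rw [Complex.mul_conj, Complex.mul_conj]
    rw [show ((d : ℂ) ^ 2 : ℂ) = ((d ^ 2 : ℝ) : ℂ) by push_cast; ring, ← h]
    push_cast; ring
  ext i j
  fin_cases i <;> fin_cases j <;>
    simp only [Matrix.mul_apply, Fin.sum_univ_two, Matrix.one_apply, Matrix.star_apply,
      Complex.star_def, Matrix.cons_val', Matrix.cons_val_zero, Matrix.cons_val_one,
      Matrix.head_cons, Matrix.head_fin_const, Matrix.empty_val', Matrix.cons_val_fin_one,
      map_div₀, map_neg, Complex.conj_conj, Complex.conj_ofReal, Matrix.of_apply] <;>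
    norm_num <;>
    rw [div_mul_div_comm, div_mul_div_comm, ← add_div, ← sq,
      div_eq_iff (pow_ne_zero 2 hd')] <;>
    first | linear_combination key | linear_combination -key | ring

noncomputable section QPrep

variable (n : ℕ) (φ : (Fin (n + 1) → Fin 2) → ℂ)

/-- Weight of the length-`k` prefix (only the first `k` coordinates of `x` matter). -/
def Wgt (k : ℕ) (x : Fin (n + 1) → Fin 2) : ℝ :=
  ∑ y ∈ univ.filter (fun y : Fin (n + 1) → Fin 2 =>
      ∀ i : Fin (n + 1), (i : ℕ) < k → y i = x i), Complex.normSq (φ y)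

variable {n φ}

lemma Wgt_nonneg (k : ℕ) (x) : 0 ≤ Wgt n φ k x :=
  Finset.sum_nonneg fun _ _ => Complex.normSq_nonneg _

lemma Wgt_congr {k : ℕ} {x x'} (h : ∀ i : Fin (n + 1), (i : ℕ) < k → x i = x' i) :
    Wgt n φ k x = Wgt n φ k x' := by
  unfold Wgt
  apply Finset.sum_congr _ (fun _ _ => rfl)
  ext y
  simp only [mem_filter, mem_univ, true_and]
  constructor
  · intro hy i hi; rw [hy i hi, h i hi]
  · intro hy i hi; rw [hy i hi, h i hi]

lemma Wgt_zero (hφ : ∑ s, Complex.normSq (φ s) = 1) (x) : Wgt n φ 0 x = 1 := by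
  unfold Wgt
  rw [Finset.filter_true_of_mem (by intro y _ i hi; omega)]
  exact hφ

lemma Wgt_last (x) : Wgt n φ (n + 1) x = Complex.normSq (φ x) := by
  unfold Wgt
  rw [show (univ.filter (fun y : Fin (n + 1) → Fin 2 =>
      ∀ i : Fin (n + 1), (i : ℕ) < n + 1 → y i = x i)) = {x} by
    ext y
    simp only [mem_filter, mem_univ, true_and, mem_singleton]
    constructor
    · intro hy; funext i; exact hy i i.isLt
    · rintro rfl; intro i _; rfl]
  exact Finset.sum_singleton _ _

lemma Wgt_mono (k : ℕ) (x) : Wgt n φ (k + 1) x ≤ Wgt n φ k x := by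
  apply Finset.sum_le_sum_of_subset_of_nonneg
  · intro y hy
    simp only [mem_filter, mem_univ, true_and] at *
    intro i hi; exact hy i (by omega)
  · intro y _ _; exact Complex.normSq_nonneg _

lemma Wgt_split (k : Fin (n + 1)) (x : Fin (n + 1) → Fin 2) :
    Wgt n φ ((k : ℕ) + 1) (Function.update x k 0)
      + Wgt n φ ((k : ℕ) + 1) (Function.update x k 1) = Wgt n φ k x := by
  unfold Wgt
  rw [← Finset.sum_filter_add_sum_filter_not
      (univ.filter fun y : Fin (n + 1) → Fin 2 =>
        ∀ i : Fin (n + 1), (i : ℕ) < (k : ℕ) → y i = x i) (fun y => y k = 0)]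
  congr 1
  · apply Finset.sum_congr _ (fun _ _ => rfl)
    rw [Finset.filter_filter]
    ext y
    simp only [mem_filter, mem_univ, true_and]
    constructor
    · intro hy
      have hk0 : y k = 0 := by
        have := hy k (by omega)
        rwa [Function.update_self] at this
      refine ⟨fun i hi => ?_, hk0⟩
      have hik : i ≠ k := fun h => by simp [h] at hi
      have := hy i (by omega)
      rwa [Function.update_of_ne hik] at this
    · rintro ⟨hy, hk0⟩ i hi
      by_cases hik : i = k
      · subst hik; rw [hk0, Function.update_self]
      · rw [Function.update_of_ne hik]
        have : (i : ℕ) < (k : ℕ) := by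
          rcases Nat.lt_succ_iff_lt_or_eq.mp hi with h | h
          · exact h
          · exact absurd (Fin.ext h) hik
        exact hy i this
  · apply Finset.sum_congr _ (fun _ _ => rfl)
    rw [Finset.filter_filter]
    ext y
    simp only [mem_filter, mem_univ, true_and]
    constructor
    · intro hy
      have hk1 : y k = 1 := by
        have := hy k (by omega)
        rwa [Function.update_self] at this
      refine ⟨fun i hi => ?_, by rw [hk1]; exact one_ne_zero⟩
      have hik : i ≠ k := fun h => by simp [h] at hi
      have := hy i (by omega)
      rwa [Function.update_of_ne hik] at this
    · rintro ⟨hy, hk0⟩ i hi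
      have hk1 : y k = 1 := by omega
      by_cases hik : i = k
      · subst hik; rw [hk1, Function.update_self]
      · rw [Function.update_of_ne hik]
        have : (i : ℕ) < (k : ℕ) := by
          rcases Nat.lt_succ_iff_lt_or_eq.mp hi with h | h
          · exact h
          · exact absurd (Fin.ext h) hik
        exact hy i this

variable (n φ)

/-- Intermediate amplitude. -/
def amp (k : ℕ) (x : Fin (n + 1) → Fin 2) : ℂ :=
  if k ≤ n then (Real.sqrt (Wgt n φ k x) : ℂ) else φ x

/-- Intermediate state after `k` steps. -/
def sv (k : ℕ) (x : Fin (n + 1) → Fin 2) : ℂ :=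
  if ∀ i : Fin (n + 1), k ≤ (i : ℕ) → x i = 0 then amp n φ k x else 0

variable {n φ}

lemma amp_normSq {k : ℕ} (hk : k ≤ n + 1) (x) :
    Complex.normSq (amp n φ k x) = Wgt n φ k x := by
  unfold amp
  by_cases h : k ≤ n
  · rw [if_pos h, Complex.normSq_ofReal, Real.mul_self_sqrt (Wgt_nonneg k x)]
  · rw [if_neg h]
    have : k = n + 1 := by omega
    rw [this, Wgt_last]

/-- The extension of a string `s` of length `k` by `j` at position `k` and `0` beyond. -/
def extStr (k : Fin (n + 1)) (s : Fin (k : ℕ) → Fin 2) (j : Fin 2) : Fin (n + 1) → Fin 2 :=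
  fun i => if h : (i : ℕ) < (k : ℕ) then s ⟨i, h⟩ else if (i : ℕ) = (k : ℕ) then j else 0

lemma extStr_eq {x : Fin (n + 1) → Fin 2} (k : Fin (n + 1)) (j : Fin 2)
    (hx : ∀ i : Fin (n + 1), (k : ℕ) + 1 ≤ (i : ℕ) → x i = 0) :
    extStr (n := n) k (fun i => x (Fin.castLE k.isLt.le i)) j = Function.update x k j := by
  funext i
  unfold extStr
  by_cases h : (i : ℕ) < (k : ℕ)
  · rw [dif_pos h, Function.update_of_ne (by exact fun he => by subst he; omega)]
    congr 1
  · rw [dif_neg h]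
    by_cases h2 : (i : ℕ) = (k : ℕ)
    · have : i = k := Fin.ext h2
      subst this
      rw [if_pos rfl, Function.update_self]
    · rw [if_neg h2, Function.update_of_ne (fun he => by subst he; omega),
        hx i (by omega)]

lemma extStr_eq_update (k : Fin (n + 1)) (s : Fin (k : ℕ) → Fin 2) (j : Fin 2) :
    extStr (n := n) k s j = Function.update (extStr (n := n) k s 0) k j := by
  funext i
  unfold extStr
  by_cases h : (i : ℕ) < (k : ℕ)
  · rw [dif_pos h, Function.update_of_ne (by exact fun he => by subst he; omega), dif_pos h]
  · by_cases h2 : (i : ℕ) = (k : ℕ)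
    · have : i = k := Fin.ext h2
      subst this
      rw [dif_neg h, if_pos rfl, Function.update_self]
    · rw [dif_neg h, if_neg h2, Function.update_of_ne (fun he => by subst he; omega),
        dif_neg h, if_neg h2]

variable (n φ)

/-- The single-qubit unitaries. -/
def Umat (k : Fin (n + 1)) (s : Fin (k : ℕ) → Fin 2) : Matrix (Fin 2) (Fin 2) ℂ :=
  if Real.sqrt (Wgt n φ k (extStr k s 0)) = 0 then 1 else
    !![amp n φ ((k : ℕ) + 1) (extStr k s 0) / (Real.sqrt (Wgt n φ k (extStr k s 0)) : ℝ),
        -(starRingEnd ℂ) (amp n φ ((k : ℕ) + 1) (extStr k s 1))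
          / (Real.sqrt (Wgt n φ k (extStr k s 0)) : ℝ);
       amp n φ ((k : ℕ) + 1) (extStr k s 1) / (Real.sqrt (Wgt n φ k (extStr k s 0)) : ℝ),
        (starRingEnd ℂ) (amp n φ ((k : ℕ) + 1) (extStr k s 0))
          / (Real.sqrt (Wgt n φ k (extStr k s 0)) : ℝ)]

variable {n φ}

lemma Umat_col_sum (k : Fin (n + 1)) (s : Fin (k : ℕ) → Fin 2) :
    Complex.normSq (amp n φ ((k : ℕ) + 1) (extStr k s 0))
      + Complex.normSq (amp n φ ((k : ℕ) + 1) (extStr k s 1))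
      = Wgt n φ (k : ℕ) (extStr k s 0) := by
  rw [amp_normSq (by omega), amp_normSq (by omega), ← Wgt_split k (extStr k s 0),
    ← extStr_eq_update k s 0, ← extStr_eq_update k s 1]

lemma Umat_unitary (k : Fin (n + 1)) (s : Fin (k : ℕ) → Fin 2) :
    Umat n φ k s ∈ Matrix.unitaryGroup (Fin 2) ℂ := by
  unfold Umat
  split_ifs with hd
  · rw [Matrix.mem_unitaryGroup_iff]; simp
  · exact col_unitary _ _ _ hd (by
      rw [Umat_col_sum k s, Real.sq_sqrt (Wgt_nonneg _ _)])

lemma step (k : Fin (n + 1)) :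
    Matrix.mulVec (ctrlOp n k (Umat n φ k)) (sv n φ (k : ℕ)) = sv n φ ((k : ℕ) + 1) := by
  funext x
  change (∑ y, ctrlOp n k (Umat n φ k) x y * sv n φ (k : ℕ) y) = _
  by_cases hx : ∀ i : Fin (n + 1), (k : ℕ) + 1 ≤ (i : ℕ) → x i = 0
  · set u0 := Function.update x k 0 with hu0
    set s : Fin (k : ℕ) → Fin 2 := fun i => x (Fin.castLE k.isLt.le i) with hs
    have he : ∀ j, extStr (n := n) k s j = Function.update x k j := fun j => extStr_eq k j hx
    have hext : extStr (n := n) k s 0 = u0 := (he 0).trans hu0.symm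
    have hWu : Wgt n φ (k : ℕ) (extStr k s 0) = Wgt n φ (k : ℕ) x := by
      apply Wgt_congr
      intro i hi
      have hik : i ≠ k := fun hh => by subst hh; omega
      rw [hext, hu0, Function.update_of_ne hik]
    have hkn : (k : ℕ) ≤ n := by omega
    rw [Fintype.sum_eq_single u0 ?_]
    · have hc : ctrlOp n k (Umat n φ k) x u0 = Umat n φ k s (x k) 0 := by
        simp only [ctrlOp, Matrix.of_apply]
        rw [if_pos (fun i hik => by rw [hu0, Function.update_of_ne hik])]
        rw [hu0, Function.update_self]
      have hsvu : sv n φ (k : ℕ) u0 = amp n φ (k : ℕ) u0 := by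
        apply if_pos
        intro i hi
        by_cases hik : i = k
        · subst hik; rw [hu0, Function.update_self]
        · have : (k : ℕ) + 1 ≤ (i : ℕ) := by
            have : (i : ℕ) ≠ (k : ℕ) := fun hh => hik (Fin.ext hh)
            omega
          rw [hu0, Function.update_of_ne hik, hx i this]
      have hampu : amp n φ (k : ℕ) u0 = (Real.sqrt (Wgt n φ (k : ℕ) (extStr k s 0)) : ℂ) := by
        rw [amp, if_pos hkn, hext]
      rw [hc, hsvu, hampu, sv, if_pos hx]
      rw [Umat]
      split_ifs with hd
      · rw [hd]
        have hW0 : Wgt n φ (k : ℕ) x = 0 := by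
          rw [← hWu]; exact (Real.sqrt_eq_zero (Wgt_nonneg _ _)).mp hd
        have hamp1 : amp n φ ((k : ℕ) + 1) x = 0 := by
          rw [← Complex.normSq_eq_zero]
          have h1 := amp_normSq (φ := φ) (k := (k : ℕ) + 1) (by omega) x
          have h2 := Wgt_mono (φ := φ) (k : ℕ) x
          have h3 := Wgt_nonneg (φ := φ) ((k : ℕ) + 1) x
          rw [h1]
          linarith
        rw [hamp1, Complex.ofReal_zero, mul_zero]
      · have hd' : ((Real.sqrt (Wgt n φ (k : ℕ) (extStr k s 0)) : ℝ) : ℂ) ≠ 0 :=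
          Complex.ofReal_ne_zero.mpr hd
        have hxk : x k = 0 ∨ x k = 1 := by omega
        rcases hxk with hxk | hxk <;>
          rw [hxk] <;>
          simp only [Matrix.cons_val', Matrix.cons_val_zero, Matrix.cons_val_one,
            Matrix.head_cons, Matrix.empty_val', Matrix.cons_val_fin_one, Matrix.of_apply,
            Matrix.head_fin_const] <;>
          rw [div_mul_cancel₀ _ hd', he, ← hxk, Function.update_eq_self]
    · intro y hy
      by_cases h1 : ∀ i : Fin (n + 1), i ≠ k → x i = y i
      · by_cases h2 : ∀ i : Fin (n + 1), (k : ℕ) ≤ (i : ℕ) → y i = 0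
        · exfalso
          apply hy
          funext i
          by_cases hik : i = k
          · rw [hik, h2 k le_rfl, hu0, Function.update_self]
          · rw [hu0, Function.update_of_ne hik]
            exact (h1 i hik).symm
        · have : sv n φ (k : ℕ) y = 0 := if_neg h2
          rw [this, mul_zero]
      · have : ctrlOp n k (Umat n φ k) x y = 0 := if_neg h1
        rw [this, zero_mul]
  · rw [sv, if_neg hx]
    apply Finset.sum_eq_zero
    intro y _
    by_cases h1 : ∀ i : Fin (n + 1), i ≠ k → x i = y i
    · by_cases h2 : ∀ i : Fin (n + 1), (k : ℕ) ≤ (i : ℕ) → y i = 0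
      · exfalso
        apply hx
        intro i hi
        have hik : i ≠ k := fun he => by subst he; omega
        rw [h1 i hik, h2 i (by omega)]
      · have : sv n φ (k : ℕ) y = 0 := if_neg h2
        rw [this, mul_zero]
    · have : ctrlOp n k (Umat n φ k) x y = 0 := if_neg h1
      rw [this, zero_mul]

end QPrep

end QPrepAux

/-- Every unit vector `|φ⟩` of `n + 1` qubits is generated from `|0^{n+1}⟩` by a
sequence of controlled single-qubit unitaries: there are unitary `2 × 2`
matrices `U^(s)` for all strings `s` of length at most `n` such that
`|φ⟩ = Uₙ Uₙ₋₁ ⋯ U₀ |0^{n+1}⟩`, where `U_k = ∑_{|s| = k} |s⟩⟨s| ⊗ U^(s) ⊗ I`. -/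
theorem exists_generator (n : ℕ) (φ : (Fin (n + 1) → Fin 2) → ℂ)
    (hφ : ∑ s, Complex.normSq (φ s) = 1) :
    ∃ U : (k : Fin (n + 1)) → ((Fin (k : ℕ) → Fin 2) → Matrix (Fin 2) (Fin 2) ℂ),
      (∀ k s, U k s ∈ Matrix.unitaryGroup (Fin 2) ℂ) ∧
      φ = Matrix.mulVec
            (((List.finRange (n + 1)).reverse.map fun k => ctrlOp n k (U k)).prod)
            (fun s => if s = fun _ => (0 : Fin 2) then 1 else 0) := by
  refine ⟨fun k => Umat n φ k, fun k s => Umat_unitary k s, ?_⟩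
  have hsv0 : sv n φ 0 = (fun s => if s = fun _ => (0 : Fin 2) then 1 else 0) := by
    funext x
    unfold sv
    by_cases h : ∀ i : Fin (n + 1), (0 : ℕ) ≤ (i : ℕ) → x i = 0
    · rw [if_pos h, if_pos (funext fun i => h i (Nat.zero_le _))]
      unfold amp
      rw [if_pos (Nat.zero_le _), Wgt_zero hφ, Real.sqrt_one, Complex.ofReal_one]
    · rw [if_neg h, if_neg (fun hh => h (fun i _ => congrFun hh i))]
  have hsvl : sv n φ (n + 1) = φ := by
    funext x
    unfold sv
    rw [if_pos (fun i hi => absurd i.isLt (by omega))]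
    unfold amp
    rw [if_neg (by omega)]
  have main : ∀ m, m ≤ n + 1 →
      Matrix.mulVec
        ((((List.finRange (n + 1)).take m).reverse.map fun k => ctrlOp n k (Umat n φ k)).prod)
        (sv n φ 0) = sv n φ m := by
    intro m
    induction m with
    | zero => intro _; simp [Matrix.one_mulVec]
    | succ m ih =>
      intro hm
      have hm' : m < n + 1 := by omega
      have hlen : m < (List.finRange (n + 1)).length := by rw [List.length_finRange]; exact hm'
      rw [List.take_succ, List.getElem?_eq_getElem hlen, List.getElem_finRange]
      rw [List.reverse_append, List.map_append, List.prod_append]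
      simp only [Option.toList_some, List.reverse_cons, List.reverse_nil, List.nil_append,
        List.map_cons, List.map_nil, List.prod_cons, List.prod_nil, mul_one]
      rw [← Matrix.mulVec_mulVec, ih (by omega)]
      have hst := step (n := n) (φ := φ) (Fin.cast (List.length_finRange : (List.finRange (n + 1)).length = n + 1) ⟨m, hlen⟩)
      simpa using hst
  have := main (n + 1) le_rfl
  rw [List.take_of_length_le (by rw [List.length_finRange])] at this
  rw [hsv0, hsvl] at this
  exact this.symm
end

section
/- If $\mathcal{C}$ is a classically simulatable class of partial decision problems, then $\exists\cdot\mathcal{C} \subseteq \exists^{Q}\cdot\mathcal{C}$: every partial decision problem obtained from $\mathcal{C}$ by a classical existential quantifier (ranging over binary strings of bounded length) is also obtained by a quantum existential quantifier (ranging over unit vectors of the corresponding size). -/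
/-- Qustrings of size `n`: vectors indexed by binary strings of length `n`. -/
abbrev QVec (n : ℕ) := (Fin n → Fin 2) → ℂ

/-- The type of all finite-size qustring witnesses (a vector together with its
size). -/
abbrev QWit := Σ n : ℕ, QVec n

/-- The classical basis vector `|x⟩`. -/
def bvec {n : ℕ} (x : Fin n → Fin 2) : QVec n := fun y => if y = x then 1 else 0

/-- The embedding of a classical string `x` as the qustring witness `|x⟩`. -/
def emb {n : ℕ} (x : Fin n → Fin 2) : QWit := ⟨n, bvec x⟩

/-- The set of qustrings (unit vectors) of size `n`, viewed inside `QWit`. -/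
def S (n : ℕ) : Set QWit := { ψ | ψ.1 = n ∧ ∑ y, Complex.normSq (ψ.2 y) = 1 }

variable {Φ : Type*}

/-- `B` is classically separable: whenever each classical string `x` of length
`n` satisfies `⟨x|ψ⟩ = 0` or `(|x⟩, φ) ∈ B`, the pair `(⟨n, ψ⟩, φ)` is in `B`. -/
def ClassSep (B : Set (QWit × Φ)) : Prop :=
  ∀ (n : ℕ) (ψ : QVec n), (∑ y, Complex.normSq (ψ y)) = 1 → ∀ φ : Φ,
    (∀ x : Fin n → Fin 2, ψ x = 0 ∨ (emb x, φ) ∈ B) → ((⟨n, ψ⟩ : QWit), φ) ∈ B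

/-- `𝒞` is classically simulatable: each `(A, B) ∈ 𝒞` admits `(C, D) ∈ 𝒞` with
classically separable components agreeing with `(A, B)` on all classical basis
states. -/
def ClassSim (𝒞 : Set (Set (QWit × Φ) × Set (QWit × Φ))) : Prop :=
  ∀ AB ∈ 𝒞, ∃ CD ∈ 𝒞, ClassSep CD.1 ∧ ClassSep CD.2 ∧
    ∀ (n : ℕ) (x : Fin n → Fin 2) (φ : Φ),
      ((emb x, φ) ∈ AB.1 ↔ (emb x, φ) ∈ CD.1) ∧
      ((emb x, φ) ∈ AB.2 ↔ (emb x, φ) ∈ CD.2)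

/-- The classical existential operator `∃·𝒞`: the witness ranges over classical
strings of length `p (ℓ φ)`, embedded as basis qustrings. -/
def existsC (ℓ : Φ → ℕ) (𝒞 : Set (Set (QWit × Φ) × Set (QWit × Φ))) :
    Set (Set Φ × Set Φ) :=
  { AB | ∃ p : ℕ → ℕ, ∃ CD ∈ 𝒞,
      (∀ φ ∈ AB.1, ∃ x : Fin (p (ℓ φ)) → Fin 2, (emb x, φ) ∈ CD.1) ∧
      (∀ φ ∈ AB.2, ∀ x : Fin (p (ℓ φ)) → Fin 2, (emb x, φ) ∈ CD.2) }

/-- The quantum existential operator `∃^Q·𝒞`: the witness ranges over all unit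
vectors of size `p (ℓ φ)`. -/
def existsQ (ℓ : Φ → ℕ) (𝒞 : Set (Set (QWit × Φ) × Set (QWit × Φ))) :
    Set (Set Φ × Set Φ) :=
  { AB | ∃ p : ℕ → ℕ, ∃ CD ∈ 𝒞,
      (∀ φ ∈ AB.1, ∃ ψ ∈ S (p (ℓ φ)), (ψ, φ) ∈ CD.1) ∧
      (∀ φ ∈ AB.2, ∀ ψ ∈ S (p (ℓ φ)), (ψ, φ) ∈ CD.2) }

theorem bvec_normSq_sum {n : ℕ} (x : Fin n → Fin 2) :
    ∑ y, Complex.normSq (bvec x y) = 1 := by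
  simp [bvec, apply_ite Complex.normSq]

theorem emb_mem_S {n : ℕ} (x : Fin n → Fin 2) : emb x ∈ S n :=
  ⟨rfl, bvec_normSq_sum x⟩

theorem ClassSep.mem_of_forall_emb_mem {D : Set (QWit × Φ)} (hD : ClassSep D) {n : ℕ}
    {φ : Φ} (hφ : ∀ x : Fin n → Fin 2, (emb x, φ) ∈ D) {ψ : QWit} (hψ : ψ ∈ S n) :
    (ψ, φ) ∈ D := by
  obtain ⟨m, ψ⟩ := ψ
  obtain ⟨rfl, hunit⟩ := hψ
  exact hD m ψ hunit φ fun x => Or.inr (hφ x)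

/-- If `𝒞` is classically simulatable, then `∃·𝒞 ⊆ ∃^Q·𝒞`. -/
theorem existsC_subset_existsQ (ℓ : Φ → ℕ)
    (𝒞 : Set (Set (QWit × Φ) × Set (QWit × Φ))) (h : ClassSim 𝒞) :
    existsC ℓ 𝒞 ⊆ existsQ ℓ 𝒞 := by
  rintro AB ⟨p, CD, hCD, hyes, hno⟩
  obtain ⟨CD', hCD', -, hsep, hagree⟩ := h CD hCD
  refine ⟨p, CD', hCD', fun φ hφ => ?_, fun φ hφ => ?_⟩
  · obtain ⟨x, hx⟩ := hyes φ hφ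
    exact ⟨emb x, emb_mem_S x, (hagree _ x φ).1.mp hx⟩
  · exact fun ψ hψ =>
      hsep.mem_of_forall_emb_mem (fun x => (hagree _ x φ).2.mp (hno φ hφ x)) hψ
end
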